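/- arXiv:2511.09875 — 2 statements merged into one kernel-verified Lean document; each statement's English description precedes it below -/
import Mathlib

section
/- Dually to the previous statement: with the same setup, if θ_k < 0, then the map ⊕_{e: s(e)=k} B_e : V_k → ⊕_{e: s(e)=k} V_{t(e)} is injective for any θ-stable representation. -/
open Module

/-- same setup as the surjectivity lemma (quiver without self-loops, `θ · dim V = 0`,
`(V, B)` `θ`-stable, i.e. every nonzero proper subrepresentation `W` satisfies `θ · dim W > 0`,
equivalently `θ · dim(V/W) < 0`).  If `θ k < 0` then the combined map
`⊕_{e : s(e) = k} B_e : V_k → ⊕ V_{t(e)}` is injective, i.e. the intersection of the kernels of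
the `B_e` with source `k` is zero. -/
theorem stable_rep_injective_at_negative_node
    (I : Type*) [Fintype I] (E : Type*) [Fintype E] (s t : E → I)
    (hnoloop : ∀ e, s e ≠ t e)
    (V : I → Type*) [∀ i, AddCommGroup (V i)] [∀ i, Module ℂ (V i)]
    [∀ i, FiniteDimensional ℂ (V i)]
    (B : ∀ e, V (s e) →ₗ[ℂ] V (t e))
    (θ : I → ℝ)
    (hsum : ∑ i, θ i * (finrank ℂ (V i) : ℝ) = 0)
    (hstable : ∀ W : ∀ i, Submodule ℂ (V i),
      (∀ e, W (s e) ≤ (W (t e)).comap (B e)) →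
      (∃ i, W i ≠ ⊥) → (∃ i, W i ≠ ⊤) →
      0 < ∑ i, θ i * (finrank ℂ (W i) : ℝ))
    (k : I) (hk : θ k < 0) :
    (⨅ e : {e : E // s e = k}, (e.2 ▸ LinearMap.ker (B e.1) : Submodule ℂ (V k))) = ⊥ := by
  classical
  set K : ∀ i, Submodule ℂ (V i) :=
    fun i => ⨅ e : {e : E // s e = i}, (e.2 ▸ LinearMap.ker (B e.1) : Submodule ℂ (V i)) with hK
  show K k = ⊥
  by_contra hne
  -- elements of K (s e) are in ker (B e)
  have hker : ∀ e (x : V (s e)), x ∈ K (s e) → B e x = 0 := by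
    intro e x hx
    have := Submodule.mem_iInf _ |>.mp hx ⟨e, rfl⟩
    simpa using this
  set W : ∀ i, Submodule ℂ (V i) := fun i => if h : i = k then K i else ⊥ with hW
  have hWk : W k = K k := by simp [hW]
  have hWne : ∀ i, i ≠ k → W i = ⊥ := by intro i hi; simp [hW, hi]
  have hsub : ∀ e, W (s e) ≤ (W (t e)).comap (B e) := by
    intro e
    by_cases h : s e = k
    · intro x hx
      have hxK : x ∈ K (s e) := by
        rw [hW] at hx; simpa [h] using hx
      simp [Submodule.mem_comap, hker e x hxK]
    · rw [hWne _ h]; exact bot_le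
  have hbot : ∃ i, W i ≠ ⊥ := ⟨k, by rw [hWk]; exact hne⟩
  have htop : ∃ i, W i ≠ ⊤ := by
    by_contra htop
    push_neg at htop
    -- all W i = ⊤; for i ≠ k this forces V i trivial
    have hdim : ∀ i, i ≠ k → (finrank ℂ (V i) : ℝ) = 0 := by
      intro i hi
      have h1 : (⊥ : Submodule ℂ (V i)) = ⊤ := by rw [← hWne i hi, htop i]
      have : finrank ℂ (V i) = 0 := by
        rw [← finrank_top ℂ (V i), ← h1]; simp
      simp [this]
    have : θ k * (finrank ℂ (V k) : ℝ) = 0 := by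
      rw [← hsum]
      rw [Finset.sum_eq_single k]
      · intro i _ hi; rw [hdim i hi]; ring
      · intro h; exact absurd (Finset.mem_univ k) h
    have hVk : (finrank ℂ (V k) : ℝ) = 0 := by
      rcases mul_eq_zero.mp this with h | h
      · exact absurd h hk.ne
      · exact h
    have : Subsingleton (V k) := by
      have h2 : finrank ℂ (V k) = 0 := by exact_mod_cast hVk
      exact finrank_zero_iff.mp h2
    exact hne (Submodule.eq_bot_of_subsingleton)
  have hpos := hstable W hsub hbot htop
  have hsum' : ∑ i, θ i * (finrank ℂ (W i) : ℝ) = θ k * (finrank ℂ (K k) : ℝ) := by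
    rw [Finset.sum_eq_single k]
    · rw [hWk]
    · intro i _ hi; rw [hWne i hi]; simp
    · intro h; exact absurd (Finset.mem_univ k) h
  rw [hsum'] at hpos
  have : θ k * (finrank ℂ (K k) : ℝ) ≤ 0 :=
    mul_nonpos_of_nonpos_of_nonneg hk.le (by positivity)
  linarith
end

section
/- Fix a gauge node k of a quiver, with weights μ_1,…,μ_{v_-} for V_-, ν_1,…,ν_{v_+} for V_+, and variables ξ_1,…,ξ_v for V_k. Suppose that in a commutative ring the relations ∑_{m=0}^{v_-} (-1)^{v_- - m} e_{v_- - m}(μ) h_{m+p-v+1}(ξ) = (-1)^{v-1} Q ∑_{m=0}^{v_+} (-1)^m e_{v_+ - m}(ν) h_{m+p-v+1}(ξ) hold for all p ≥ 0 (relation (3.4) of the paper), and v_- ≥ v. Then c_t(V_-) − δ_t(V_-, V)·c_t(V) = (-1)^{v_- - v + 1} Q · (c_t(V_+) − δ_t(V_+, V)·c_t(V)) in R((t^{-1})), where c_t(V) = ∏(t+ξ_j), c_t(V_±) are defined analogously, and δ_t denotes the truncated Chern quotient. -/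
/-!
STATEMENT 12.  `R((t⁻¹))` is modelled as `LaurentSeries R = HahnSeries ℤ R` in `u = t⁻¹`.
-/

variable {R : Type*} [CommRing R]

/-- The element `t` of `R((t⁻¹))`. -/
noncomputable def tVar (R : Type*) [CommRing R] : LaurentSeries R :=
  HahnSeries.single (-1 : ℤ) 1

/-- Positive truncation `[f]₊`: keep the nonnegative powers of `t`. -/
noncomputable def posTrunc (f : LaurentSeries R) : LaurentSeries R :=
  { coeff := fun n => if n ≤ 0 then f.coeff n else 0
    isPWO_support' := f.isPWO_support'.mono (fun n hn => by
      rw [Function.mem_support] at hn ⊢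
      intro h
      apply hn
      show (if n ≤ 0 then f.coeff n else 0) = 0
      simp [h]) }

/-- `m`-th elementary symmetric polynomial. -/
def esymmVal {r : ℕ} (v : Fin r → R) (m : ℕ) : R :=
  ∑ s ∈ Finset.powersetCard m (Finset.univ : Finset (Fin r)), ∏ i ∈ s, v i

/-- `k`-th complete homogeneous symmetric polynomial. -/
def hsymmVal {s : ℕ} (ξ : Fin s → R) (k : ℕ) : R :=
  ∑ m ∈ (Finset.univ : Finset (Fin s)).sym k, ((m : Sym (Fin s) k).1.map ξ).prod

/-- Complete homogeneous symmetric polynomial with integer index (`0` in negative degrees). -/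
def hsymmZ {s : ℕ} (ξ : Fin s → R) (k : ℤ) : R :=
  if 0 ≤ k then hsymmVal ξ k.toNat else 0

def Hval (σ : Type*) [Fintype σ] [DecidableEq σ] (ξ : σ → R) (k : ℕ) : R :=
  ∑ m ∈ (Finset.univ : Finset σ).sym k, ((m : Sym σ k).1.map ξ).prod

lemma hsymmVal_eq_Hval {s : ℕ} (ξ : Fin s → R) (k : ℕ) : hsymmVal ξ k = Hval (Fin s) ξ k := rfl

lemma Hval_zero (σ : Type*) [Fintype σ] [DecidableEq σ] (ξ : σ → R) : Hval σ ξ 0 = 1 := by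
  rw [Hval, Finset.sym_zero, Finset.sum_singleton]
  rfl

lemma Hval_fin_zero_succ (k : ℕ) (ξ : Fin 0 → R) : Hval (Fin 0) ξ (k + 1) = 0 := by
  rw [Hval, Finset.univ_eq_empty, Finset.sym_empty, Finset.sum_empty]

lemma Hval_equiv {σ τ : Type*} [Fintype σ] [DecidableEq σ] [Fintype τ] [DecidableEq τ]
    (e : σ ≃ τ) (ξ : τ → R) (k : ℕ) : Hval τ ξ k = Hval σ (ξ ∘ e) k := by
  rw [Hval, Hval, Finset.sym_univ, Finset.sym_univ]
  refine (Fintype.sum_equiv (Sym.equivCongr e) _ _ fun m => ?_).symm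
  simp [Sym.equivCongr, Sym.coe_map, Multiset.map_map, Function.comp]

lemma Hval_option {α : Type*} [Fintype α] [DecidableEq α] (ξ : Option α → R) (k : ℕ) :
    Hval (Option α) ξ (k + 1)
      = ξ none * Hval (Option α) ξ k + Hval α (ξ ∘ some) (k + 1) := by
  rw [Hval, Hval, Hval, Finset.sym_univ, Finset.sym_univ, Finset.sym_univ]
  rw [← Equiv.sum_comp (symOptionSuccEquiv (α := α)).symm
    (fun m => ((m : Sym (Option α) (k + 1)).1.map ξ).prod), Fintype.sum_sum_type]
  congr 1
  · rw [Finset.mul_sum]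
    refine Finset.sum_congr rfl fun s _ => ?_
    show (((SymOptionSuccEquiv.decode (Sum.inl s) : Sym (Option α) (k+1))).1.map ξ).prod = _
    rw [SymOptionSuccEquiv.decode_inl]
    simp [Sym.coe_cons]
  · refine Finset.sum_congr rfl fun s _ => ?_
    show (((SymOptionSuccEquiv.decode (Sum.inr s) : Sym (Option α) (k+1))).1.map ξ).prod = _
    rw [SymOptionSuccEquiv.decode_inr]
    simp [Sym.coe_map, Multiset.map_map]

noncomputable def Pser (σ : Type*) [Fintype σ] [DecidableEq σ] (ξ : σ → R) : PowerSeries R :=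
  PowerSeries.mk fun k => (-1) ^ k * Hval σ ξ k

lemma one_add_mul_Pser_option {α : Type*} [Fintype α] [DecidableEq α] (ξ : Option α → R) :
    (1 + PowerSeries.C (ξ none) * PowerSeries.X) * Pser (Option α) ξ
      = Pser α (ξ ∘ some) := by
  ext k
  rw [add_mul, one_mul, mul_assoc, map_add, PowerSeries.coeff_C_mul]
  cases k with
  | zero =>
    simp [Pser, PowerSeries.coeff_zero_X_mul, Hval_zero]
  | succ k =>
    rw [PowerSeries.coeff_succ_X_mul]
    simp only [Pser, PowerSeries.coeff_mk]
    rw [Hval_option]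
    ring

lemma prod_mul_Pser : ∀ (n : ℕ) (ξ : Fin n → R),
    (∏ j : Fin n, (1 + PowerSeries.C (ξ j) * PowerSeries.X)) * Pser (Fin n) ξ = 1 := by
  intro n
  induction n with
  | zero =>
    intro ξ
    rw [Finset.univ_eq_empty, Finset.prod_empty, one_mul]
    ext k
    cases k with
    | zero => simp [Pser, Hval_zero]
    | succ k => simp [Pser, Hval_fin_zero_succ]
  | succ n ih =>
    intro ξ
    have e : Fin (n + 1) ≃ Option (Fin n) := finSuccEquiv n
    have hprod : (∏ j : Fin (n+1), (1 + PowerSeries.C (ξ j) * PowerSeries.X))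
        = ∏ o : Option (Fin n), (1 + PowerSeries.C ((ξ ∘ e.symm) o) * PowerSeries.X) :=
      (Equiv.prod_comp e.symm fun j => (1 + PowerSeries.C (ξ j) * PowerSeries.X)).symm
    have hP : Pser (Fin (n+1)) ξ = Pser (Option (Fin n)) (ξ ∘ e.symm) := by
      unfold Pser
      ext k
      rw [PowerSeries.coeff_mk, PowerSeries.coeff_mk, Hval_equiv e.symm ξ k]
    rw [hprod, hP, Fintype.prod_option,
      mul_comm (1 + PowerSeries.C ((ξ ∘ e.symm) none) * PowerSeries.X) _, mul_assoc,
      one_add_mul_Pser_option]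
    exact ih _

lemma factor_eq (x : R) :
    tVar R + HahnSeries.C x
      = HahnSeries.single (-1 : ℤ) (1 : R) *
          HahnSeries.ofPowerSeries ℤ R (1 + PowerSeries.C x * PowerSeries.X) := by
  have h1 : HahnSeries.ofPowerSeries ℤ R (1 + PowerSeries.C x * PowerSeries.X)
      = 1 + HahnSeries.C x * HahnSeries.single (1 : ℤ) (1 : R) := by
    rw [RingHom.map_add, RingHom.map_one, RingHom.map_mul, HahnSeries.ofPowerSeries_C,
      HahnSeries.ofPowerSeries_X]
  rw [h1, mul_add, mul_one]
  congr 1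
  rw [HahnSeries.C_apply, HahnSeries.single_mul_single, HahnSeries.single_mul_single]
  norm_num

lemma prodF' {r : ℕ} (μ : Fin r → R) :
    (∏ a : Fin r, (tVar R + HahnSeries.C (μ a)))
      = HahnSeries.single (-(r : ℤ)) (1 : R) *
          HahnSeries.ofPowerSeries ℤ R
            (∏ a : Fin r, (1 + PowerSeries.C (μ a) * PowerSeries.X)) := by
  calc (∏ a : Fin r, (tVar R + HahnSeries.C (μ a)))
      = ∏ a : Fin r, (HahnSeries.single (-1 : ℤ) (1 : R) *
          HahnSeries.ofPowerSeries ℤ R (1 + PowerSeries.C (μ a) * PowerSeries.X)) :=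
        Finset.prod_congr rfl fun a _ => factor_eq (μ a)
    _ = (∏ _a : Fin r, HahnSeries.single (-1 : ℤ) (1 : R)) *
          ∏ a : Fin r, HahnSeries.ofPowerSeries ℤ R
            (1 + PowerSeries.C (μ a) * PowerSeries.X) := Finset.prod_mul_distrib
    _ = _ := by
        rw [Finset.prod_const, HahnSeries.single_pow, ← map_prod]
        simp [Finset.card_univ]

lemma ofPS_coeff' (f : PowerSeries R) (z : ℤ) :
    (HahnSeries.ofPowerSeries ℤ R f).coeff z
      = if 0 ≤ z then PowerSeries.coeff z.toNat f else 0 := by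
  split_ifs with h
  · have hz : ((z.toNat : ℕ) : ℤ) = z := Int.toNat_of_nonneg h
    calc (HahnSeries.ofPowerSeries ℤ R f).coeff z
        = (HahnSeries.ofPowerSeries ℤ R f).coeff ((z.toNat : ℕ) : ℤ) := by rw [hz]
      _ = PowerSeries.coeff z.toNat f := HahnSeries.ofPowerSeries_apply_coeff f z.toNat
  · rw [HahnSeries.ofPowerSeries_apply]
    refine HahnSeries.embDomain_notin_range ?_
    rintro ⟨n, hn⟩
    have hn : (n : ℤ) = z := hn
    omega

lemma single_mul_coeff' (a z : ℤ) (u : R) (x : HahnSeries ℤ R) :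
    (HahnSeries.single a u * x).coeff z = u * x.coeff (z - a) := by
  have h := HahnSeries.coeff_single_mul_add (r := u) (x := x) (b := a) (a := z - a)
  rw [← h]
  congr 1
  ring

lemma single_sum (a : ℤ) {ι : Type*} (s : Finset ι) (f : ι → R) :
    HahnSeries.single a (∑ i ∈ s, f i) = ∑ i ∈ s, HahnSeries.single a (f i) :=
  map_sum (HahnSeries.single.addMonoidHom a) f s

lemma esymm_compl {r : ℕ} (m : ℕ) (hm : m ≤ r) (μ : Fin r → R) :
    (∑ S ∈ Finset.powersetCard m (Finset.univ : Finset (Fin r)),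
        ∏ i ∈ Finset.univ \ S, μ i) = esymmVal μ (r - m) := by
  rw [esymmVal]
  refine Finset.sum_nbij' (fun S => Finset.univ \ S) (fun T => Finset.univ \ T)
    ?_ ?_ ?_ ?_ ?_
  · intro S hS
    rw [Finset.mem_powersetCard] at hS ⊢
    refine ⟨Finset.sdiff_subset, ?_⟩
    rw [Finset.card_sdiff_of_subset (Finset.subset_univ S), Finset.card_univ, Fintype.card_fin, hS.2]
  · intro T hT
    rw [Finset.mem_powersetCard] at hT ⊢
    refine ⟨Finset.sdiff_subset, ?_⟩
    rw [Finset.card_sdiff_of_subset (Finset.subset_univ T), Finset.card_univ, Fintype.card_fin, hT.2]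
    omega
  · intro S _
    show Finset.univ \ (Finset.univ \ S) = S
    rw [Finset.sdiff_sdiff_self_left, Finset.univ_inter]
  · intro T _
    show Finset.univ \ (Finset.univ \ T) = T
    rw [Finset.sdiff_sdiff_self_left, Finset.univ_inter]
  · intro S _
    rfl

lemma prod_eq_sum_single' {r : ℕ} (μ : Fin r → R) :
    (∏ a : Fin r, (tVar R + HahnSeries.C (μ a)))
      = ∑ m ∈ Finset.range (r + 1),
          HahnSeries.single (-(m : ℤ)) (esymmVal μ (r - m)) := by
  rw [Finset.prod_add, Finset.powerset_card_biUnion,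
    Finset.sum_biUnion (fun i _ j _ hij => Finset.pairwise_disjoint_powersetCard _ hij)]
  rw [Finset.card_univ, Fintype.card_fin]
  refine Finset.sum_congr rfl fun m hm => ?_
  have hm' : m ≤ r := by
    have := Finset.mem_range.mp hm
    omega
  rw [← esymm_compl m hm' μ, single_sum]
  refine Finset.sum_congr rfl fun S hS => ?_
  have hcard : S.card = m := (Finset.mem_powersetCard.mp hS).2
  rw [Finset.prod_const, tVar, HahnSeries.single_pow, hcard]
  rw [show (∏ i ∈ Finset.univ \ S, HahnSeries.C (μ i))
      = HahnSeries.C (∏ i ∈ Finset.univ \ S, μ i) from (map_prod _ _ _).symm]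
  rw [HahnSeries.C_apply, HahnSeries.single_mul_single]
  norm_num

section Main

variable {v : ℕ} (ξ : Fin v → R) (cinv : LaurentSeries R)
  (hcinv : (∏ j : Fin v, (tVar R + HahnSeries.C (ξ j))) * cinv = 1)

include hcinv

lemma cinv_eq : cinv = HahnSeries.single (v : ℤ) (1 : R) *
    HahnSeries.ofPowerSeries ℤ R (Pser (Fin v) ξ) := by
  set D := HahnSeries.single (v : ℤ) (1 : R) *
    HahnSeries.ofPowerSeries ℤ R (Pser (Fin v) ξ) with hD
  have h1 : (∏ j : Fin v, (tVar R + HahnSeries.C (ξ j))) * D = 1 := by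
    rw [hD, prodF', mul_mul_mul_comm, HahnSeries.single_mul_single, ← RingHom.map_mul,
      prod_mul_Pser, RingHom.map_one]
    norm_num
  calc cinv = ((∏ j : Fin v, (tVar R + HahnSeries.C (ξ j))) * D) * cinv := by
        rw [h1, one_mul]
    _ = D * ((∏ j : Fin v, (tVar R + HahnSeries.C (ξ j))) * cinv) := by ring
    _ = D := by rw [hcinv, mul_one]

lemma cinv_coeff (z : ℤ) :
    cinv.coeff z = if 0 ≤ z - v then
      (-1 : R) ^ (z - v).toNat * hsymmVal ξ (z - v).toNat else 0 := by
  rw [cinv_eq ξ cinv hcinv, single_mul_coeff', one_mul, ofPS_coeff']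
  split_ifs with h
  · rw [Pser, PowerSeries.coeff_mk, hsymmVal_eq_Hval]
  · rfl

end Main

lemma hahn_sum_coeff {ι : Type*} (s : Finset ι) (f : ι → LaurentSeries R) (n : ℤ) :
    (∑ i ∈ s, f i).coeff n = ∑ i ∈ s, (f i).coeff n := by
  classical
  induction s using Finset.cons_induction with
  | empty => simp
  | cons i s hi ih => rw [Finset.sum_cons, Finset.sum_cons, HahnSeries.coeff_add, ih]


/-- suppose in `R` the relations (3.4) of the paper
`∑_{m=0}^{v₋} (-1)^{v₋-m} e_{v₋-m}(μ) h_{m+p-v+1}(ξ)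
   = (-1)^{v-1} Q ∑_{m=0}^{v₊} (-1)^m e_{v₊-m}(ν) h_{m+p-v+1}(ξ)`
hold for all `p ≥ 0` (with `(-1)^{v-1}` written as the equal sign `(-1)^{v+1}`), and `v₋ ≥ v`.
Then, writing `c = c_t(V) = ∏(t+ξⱼ)`, `c₋ = c_t(V₋)`, `c₊ = c_t(V₊)` and
`δ₋ = δ_t(V₋,V) = [c₋/c]₊`, `δ₊ = δ_t(V₊,V) = [c₊/c]₊` (with `c⁻¹` the hypothesised inverse),
one has `c₋ − δ₋·c = (-1)^{v₋-v+1} Q (c₊ − δ₊·c)` in `R((t⁻¹))`. -/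
theorem quantum_chern_exchange
    (vm vp v : ℕ) (hvm : v ≤ vm)
    (μ : Fin vm → R) (ν : Fin vp → R) (ξ : Fin v → R) (Q : R)
    (cinv : LaurentSeries R)
    (hcinv : (∏ j : Fin v, (tVar R + HahnSeries.C (ξ j))) * cinv = 1)
    (hrel : ∀ p : ℕ,
      (∑ m ∈ Finset.range (vm + 1),
          (-1 : R) ^ (vm - m) * esymmVal μ (vm - m) * hsymmZ ξ ((m : ℤ) + p - v + 1)) =
        (-1 : R) ^ (v + 1) * Q *
          ∑ m ∈ Finset.range (vp + 1),
            (-1 : R) ^ m * esymmVal ν (vp - m) * hsymmZ ξ ((m : ℤ) + p - v + 1)) :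
    (∏ a : Fin vm, (tVar R + HahnSeries.C (μ a))) -
        posTrunc ((∏ a : Fin vm, (tVar R + HahnSeries.C (μ a))) * cinv) *
          (∏ j : Fin v, (tVar R + HahnSeries.C (ξ j))) =
      (-1 : LaurentSeries R) ^ (vm - v + 1) * HahnSeries.C Q *
        ((∏ b : Fin vp, (tVar R + HahnSeries.C (ν b))) -
          posTrunc ((∏ b : Fin vp, (tVar R + HahnSeries.C (ν b))) * cinv) *
            (∏ j : Fin v, (tVar R + HahnSeries.C (ξ j)))) := by
  set c : LaurentSeries R := ∏ j : Fin v, (tVar R + HahnSeries.C (ξ j)) with hc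
  set A : LaurentSeries R := ∏ a : Fin vm, (tVar R + HahnSeries.C (μ a)) with hA0
  set B : LaurentSeries R := ∏ b : Fin vp, (tVar R + HahnSeries.C (ν b)) with hB0
  set q : R := (-1 : R) ^ (vm - v + 1) * Q with hq0
  have hterm : ∀ p m : ℕ, cinv.coeff ((p : ℤ) + 1 + m)
      = (-1 : R) ^ (m + p + v + 1) * hsymmZ ξ ((m : ℤ) + p - v + 1) := by
    intro p m
    rw [cinv_coeff ξ cinv hcinv, hsymmZ]
    by_cases h : (0 : ℤ) ≤ (m : ℤ) + p - v + 1
    · rw [if_pos (by omega), if_pos h]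
      have e1 : ((p : ℤ) + 1 + m - v).toNat = ((m : ℤ) + p - v + 1).toNat := by omega
      rw [e1]
      congr 1
      have e2 : m + p + v + 1 = ((m : ℤ) + p - v + 1).toNat + 2 * v := by omega
      rw [e2, pow_add, pow_mul, neg_one_sq, one_pow, mul_one]
    · rw [if_neg (by omega), if_neg h, mul_zero]
  have hAcoeff : ∀ (r : ℕ) (μ' : Fin r → R) (p : ℕ),
      ((∏ a : Fin r, (tVar R + HahnSeries.C (μ' a))) * cinv).coeff ((p : ℤ) + 1)
      = ∑ m ∈ Finset.range (r + 1),
          esymmVal μ' (r - m) * ((-1 : R) ^ (m + p + v + 1) * hsymmZ ξ ((m : ℤ) + p - v + 1)) := by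
    intro r μ' p
    rw [prod_eq_sum_single', Finset.sum_mul, hahn_sum_coeff]
    refine Finset.sum_congr rfl fun m _ => ?_
    rw [single_mul_coeff', show ((p : ℤ) + 1 - -(m : ℤ)) = ((p : ℤ) + 1 + m) by ring, hterm p m]
  have hsign : ∀ p : ℕ, (A * cinv).coeff ((p : ℤ) + 1) = q * ((B * cinv).coeff ((p : ℤ) + 1)) := by
    intro p
    rw [hA0, hB0, hAcoeff vm μ p, hAcoeff vp ν p]
    have hL : (∑ m ∈ Finset.range (vm + 1),
          esymmVal μ (vm - m) * ((-1 : R) ^ (m + p + v + 1) * hsymmZ ξ ((m : ℤ) + p - v + 1)))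
        = (-1 : R) ^ (p + v + 1 + vm) * ∑ m ∈ Finset.range (vm + 1),
            (-1 : R) ^ (vm - m) * esymmVal μ (vm - m) * hsymmZ ξ ((m : ℤ) + p - v + 1) := by
      rw [Finset.mul_sum]
      refine Finset.sum_congr rfl fun m hm => ?_
      have hmle : m ≤ vm := by have := Finset.mem_range.mp hm; omega
      have e3 : (-1 : R) ^ (p + v + 1 + vm) * (-1 : R) ^ (vm - m) = (-1 : R) ^ (m + p + v + 1) := by
        rw [← pow_add, show (p + v + 1 + vm) + (vm - m) = (m + p + v + 1) + 2 * (vm - m) by omega,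
          pow_add, pow_mul, neg_one_sq, one_pow, mul_one]
      rw [← e3]
      ring
    have hR : (∑ m ∈ Finset.range (vp + 1),
          esymmVal ν (vp - m) * ((-1 : R) ^ (m + p + v + 1) * hsymmZ ξ ((m : ℤ) + p - v + 1)))
        = (-1 : R) ^ (p + v + 1) * ∑ m ∈ Finset.range (vp + 1),
            (-1 : R) ^ m * esymmVal ν (vp - m) * hsymmZ ξ ((m : ℤ) + p - v + 1) := by
      rw [Finset.mul_sum]
      refine Finset.sum_congr rfl fun m _ => ?_
      have e3 : (-1 : R) ^ (p + v + 1) * (-1 : R) ^ m = (-1 : R) ^ (m + p + v + 1) := by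
        rw [← pow_add, show (p + v + 1) + m = m + p + v + 1 by omega]
      rw [← e3]
      ring
    rw [hL, hR, hrel p]
    have e4 : (-1 : R) ^ (p + v + 1 + vm) * (-1 : R) ^ (v + 1) = (-1 : R) ^ (p + vm) := by
      rw [← pow_add, show (p + v + 1 + vm) + (v + 1) = (p + vm) + 2 * (v + 1) by omega,
        pow_add, pow_mul, neg_one_sq, one_pow, mul_one]
    have e5 : (-1 : R) ^ (vm - v + 1) * (-1 : R) ^ (p + v + 1) = (-1 : R) ^ (p + vm) := by
      rw [← pow_add, show (vm - v + 1) + (p + v + 1) = (p + vm) + 2 * 1 by omega,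
        pow_add, pow_mul, neg_one_sq, one_pow, mul_one]
    calc (-1 : R) ^ (p + v + 1 + vm) * ((-1 : R) ^ (v + 1) * Q *
            ∑ m ∈ Finset.range (vp + 1),
              (-1 : R) ^ m * esymmVal ν (vp - m) * hsymmZ ξ ((m : ℤ) + p - v + 1))
        = ((-1 : R) ^ (p + v + 1 + vm) * (-1 : R) ^ (v + 1)) * (Q *
            ∑ m ∈ Finset.range (vp + 1),
              (-1 : R) ^ m * esymmVal ν (vp - m) * hsymmZ ξ ((m : ℤ) + p - v + 1)) := by ring
      _ = ((-1 : R) ^ (vm - v + 1) * (-1 : R) ^ (p + v + 1)) * (Q *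
            ∑ m ∈ Finset.range (vp + 1),
              (-1 : R) ^ m * esymmVal ν (vp - m) * hsymmZ ξ ((m : ℤ) + p - v + 1)) := by
          rw [e4, e5]
      _ = q * ((-1 : R) ^ (p + v + 1) *
            ∑ m ∈ Finset.range (vp + 1),
              (-1 : R) ^ m * esymmVal ν (vp - m) * hsymmZ ξ ((m : ℤ) + p - v + 1)) := by
          rw [hq0]; ring
  have core : A * cinv - posTrunc (A * cinv)
      = HahnSeries.C q * (B * cinv - posTrunc (B * cinv)) := by
    ext n
    rw [HahnSeries.C_apply, single_mul_coeff', sub_zero, HahnSeries.coeff_sub,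
      HahnSeries.coeff_sub]
    have hpos : ∀ f : LaurentSeries R, (posTrunc f).coeff n = if n ≤ 0 then f.coeff n else 0 :=
      fun f => rfl
    rw [hpos, hpos]
    by_cases hn : n ≤ 0
    · rw [if_pos hn, if_pos hn]
      ring
    · rw [if_neg hn, if_neg hn, sub_zero, sub_zero]
      obtain ⟨p, rfl⟩ : ∃ p : ℕ, n = (p : ℤ) + 1 := ⟨(n - 1).toNat, by omega⟩
      exact hsign p
  have hA : A = (A * cinv) * c := by
    calc A = A * 1 := (mul_one A).symm
      _ = A * (c * cinv) := by rw [hcinv]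
      _ = (A * cinv) * c := by ring
  have hB : B = (B * cinv) * c := by
    calc B = B * 1 := (mul_one B).symm
      _ = B * (c * cinv) := by rw [hcinv]
      _ = (B * cinv) * c := by ring
  have hq : (-1 : LaurentSeries R) ^ (vm - v + 1) * HahnSeries.C Q = HahnSeries.C q := by
    rw [show ((-1 : LaurentSeries R)) = HahnSeries.C (-1 : R) by rw [map_neg, map_one],
      ← map_pow, ← map_mul]
  rw [hq]
  calc A - posTrunc (A * cinv) * c
      = (A * cinv) * c - posTrunc (A * cinv) * c := by rw [← hA]
    _ = (A * cinv - posTrunc (A * cinv)) * c := (sub_mul _ _ _).symm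
    _ = (HahnSeries.C q * (B * cinv - posTrunc (B * cinv))) * c := by rw [core]
    _ = HahnSeries.C q * ((B * cinv) * c - posTrunc (B * cinv) * c) := by ring
    _ = HahnSeries.C q * (B - posTrunc (B * cinv) * c) := by rw [← hB]
end
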